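/- arXiv:1601.01025 — 2 statements merged into one kernel-verified Lean document; each statement's English description precedes it below -/
import Mathlib

section
/- Inexact proximal inequality: let E be a real inner product space, f : E → ℝ convex, β > 0, ε ≥ 0, and points x, x⁺ with β(x − x⁺) ∈ ∂_ε f(x⁺). Then for every a ∈ E: ‖x⁺ − a‖² ≤ ‖x − a‖² − ‖x⁺ − x‖² + (2/β)(f(a) − f(x⁺)) + 2ε/β. -/
open RealInnerProductSpace

theorem norm_sub_sq_le_of_inner_sub_le {E : Type*} [NormedAddCommGroup E]
    [InnerProductSpace ℝ E] {x y a : E} {c : ℝ} (h : ⟪x - y, a - y⟫ ≤ c) :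
    ‖y - a‖ ^ 2 ≤ ‖x - a‖ ^ 2 - ‖y - x‖ ^ 2 + 2 * c := by
  have hxa : ‖x - a‖ ^ 2 = ‖x - y‖ ^ 2 - 2 * ⟪x - y, a - y⟫ + ‖a - y‖ ^ 2 := by
    rw [← norm_sub_sq_real, sub_sub_sub_cancel_right]
  rw [hxa, norm_sub_rev y x, norm_sub_rev y a]
  linarith

theorem stmt_15_general {E : Type*} [NormedAddCommGroup E] [InnerProductSpace ℝ E]
    (f : E → ℝ) (β ε : ℝ) (hβ : 0 < β)
    (x xp : E)
    (hsub : ∀ y : E, f y ≥ f xp + inner ℝ (β • (x - xp)) (y - xp) - ε) :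
    ∀ a : E, ‖xp - a‖ ^ 2 ≤
      ‖x - a‖ ^ 2 - ‖xp - x‖ ^ 2 + 2 / β * (f a - f xp) + 2 * ε / β := by
  intro a
  have hinner : ⟪x - xp, a - xp⟫ ≤ (f a - f xp + ε) / β := by
    have := hsub a
    rw [real_inner_smul_left] at this
    rw [le_div_iff₀ hβ]
    linarith
  calc ‖xp - a‖ ^ 2 ≤ ‖x - a‖ ^ 2 - ‖xp - x‖ ^ 2 + 2 * ((f a - f xp + ε) / β) :=
        norm_sub_sq_le_of_inner_sub_le hinner
    _ = ‖x - a‖ ^ 2 - ‖xp - x‖ ^ 2 + 2 / β * (f a - f xp) + 2 * ε / β := by ring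

theorem stmt_15 {E : Type*} [NormedAddCommGroup E] [InnerProductSpace ℝ E]
    (f : E → ℝ) (hf : ConvexOn ℝ Set.univ f) (β ε : ℝ) (hβ : 0 < β) (hε : 0 ≤ ε)
    (x xp : E)
    (hsub : ∀ y : E, f y ≥ f xp + inner ℝ (β • (x - xp)) (y - xp) - ε) :
    ∀ a : E, ‖xp - a‖ ^ 2 ≤
      ‖x - a‖ ^ 2 - ‖xp - x‖ ^ 2 + 2 / β * (f a - f xp) + 2 * ε / β :=
  stmt_15_general f β ε hβ x xp hsub
end

section
/- Fejér-type distance bound in the inexact proximal method: under the assumptions that β_k > 0, ε_k ≥ 0, β_k(a_k − a_{k+1}) ∈ ∂_{ε_k} f(a_{k+1}), and ε_k/β_k ≤ (μ_k/2)·d²(a_{k+1}, a_k) for some μ_k ∈ (0, μ] with μ ∈ (0,1), and a* is a minimizer of f, then 2(ε_k/β_k)(1/μ − 1) ≤ d²(a_k, a*) for every k. -/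
/-!
Write `u = a k - a (k+1)` and `v = a (k+1) - a*`. Testing the `ε_k`-subgradient inequality at the
minimizer `a*` gives `⟪u, v⟫ ≥ -ε_k/β_k`, so `‖a k - a*‖² = ‖u‖² + 2⟪u, v⟫ + ‖v‖² ≥ ‖u‖² - 2ε_k/β_k`,
while the error control bounds `‖u‖²` below by `2ε_k/(μ β_k)`.
-/

open scoped RealInnerProductSpace

section

variable {E : Type*} [NormedAddCommGroup E] [InnerProductSpace ℝ E]

lemma neg_div_le_inner_of_approx_subgradient {f : E → ℝ} {x w z : E} {β ε : ℝ} (hβ : 0 < β)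
    (hsub : f z ≥ f x + ⟪β • (w - x), z - x⟫ - ε) (hz : f z ≤ f x) :
    -(ε / β) ≤ ⟪w - x, x - z⟫ := by
  have hflip : ⟪w - x, z - x⟫ = -⟪w - x, x - z⟫ := by
    rw [← inner_neg_right, neg_sub]
  rw [real_inner_smul_left, hflip] at hsub
  rw [neg_le, le_div_iff₀' hβ]
  linarith

lemma sq_norm_sub_sub_le_sq_norm_sub {x w z : E} {δ : ℝ} (h : -δ ≤ ⟪w - x, x - z⟫) :
    ‖w - x‖ ^ 2 - 2 * δ ≤ ‖w - z‖ ^ 2 := by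
  have hsplit : w - z = (w - x) + (x - z) := by abel
  rw [hsplit, norm_add_sq_real]
  nlinarith [sq_nonneg ‖x - z‖]

end

theorem stmt_16_general {E : Type*} [NormedAddCommGroup E] [InnerProductSpace ℝ E]
    (f : E → ℝ)
    (a : ℕ → E) (β ε μk : ℕ → ℝ) (μ : ℝ) (hμ0 : 0 < μ)
    (hβ : ∀ k, 0 < β k)
    (hμk : ∀ k, 0 < μk k ∧ μk k ≤ μ)
    (hsub : ∀ k, ∀ y : E,
      f y ≥ f (a (k + 1)) + inner ℝ ((β k) • (a k - a (k + 1))) (y - a (k + 1)) - ε k)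
    (herr : ∀ k, ε k / β k ≤ μk k / 2 * ‖a (k + 1) - a k‖ ^ 2)
    (astar : E) (hstar : ∀ y : E, f astar ≤ f y) :
    ∀ k, 2 * (ε k / β k) * (1 / μ - 1) ≤ ‖a k - astar‖ ^ 2 := by
  intro k
  have hdist : ‖a k - a (k + 1)‖ ^ 2 - 2 * (ε k / β k) ≤ ‖a k - astar‖ ^ 2 :=
    sq_norm_sub_sub_le_sq_norm_sub
      (neg_div_le_inner_of_approx_subgradient (hβ k) (hsub k astar) (hstar _))
  have hstep : 2 * (ε k / β k) / μ ≤ ‖a k - a (k + 1)‖ ^ 2 := by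
    have hμ : ε k / β k ≤ μ / 2 * ‖a k - a (k + 1)‖ ^ 2 := by
      rw [norm_sub_rev]
      exact (herr k).trans (by gcongr; exact (hμk k).2)
    rw [div_le_iff₀ hμ0]
    linarith
  have hsplit : 2 * (ε k / β k) * (1 / μ - 1) = 2 * (ε k / β k) / μ - 2 * (ε k / β k) := by
    field_simp
  linarith

theorem stmt_16 {E : Type*} [NormedAddCommGroup E] [InnerProductSpace ℝ E]
    (f : E → ℝ) (hf : ConvexOn ℝ Set.univ f)
    (a : ℕ → E) (β ε μk : ℕ → ℝ) (μ : ℝ) (hμ0 : 0 < μ) (hμ1 : μ < 1)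
    (hβ : ∀ k, 0 < β k) (hε : ∀ k, 0 ≤ ε k)
    (hμk : ∀ k, 0 < μk k ∧ μk k ≤ μ)
    (hsub : ∀ k, ∀ y : E,
      f y ≥ f (a (k + 1)) + inner ℝ ((β k) • (a k - a (k + 1))) (y - a (k + 1)) - ε k)
    (herr : ∀ k, ε k / β k ≤ μk k / 2 * ‖a (k + 1) - a k‖ ^ 2)
    (astar : E) (hstar : ∀ y : E, f astar ≤ f y) :
    ∀ k, 2 * (ε k / β k) * (1 / μ - 1) ≤ ‖a k - astar‖ ^ 2 :=
  stmt_16_general f a β ε μk μ hμ0 hβ hμk hsub herr astar hstar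
end
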